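/- arXiv:2405.19602 — 3 statements merged into one kernel-verified Lean document; each statement's English description precedes it below -/
import Mathlib

section
/- Let z₀ ∈ ℂ \ {0} and take the parameters κ_j = z₀^{2j+1}/(2j+1) for all j ≥ 1 in the definition of the polynomials θ_k. Then for every j ≥ 1 the 2×2 determinant with rows (θ₁(z₀), θ₀(z₀)) and (θ_{2j+1}(z₀), θ_{2j}(z₀)) vanishes, i.e. θ₁(z₀)·θ_{2j}(z₀) − θ₀(z₀)·θ_{2j+1}(z₀) = 0. -/
/-!
With `κ_j = z₀^{2j+1}/(2j+1)` the exponent in the generating function is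
`∑_{m odd} (z₀ε)^m / m = artanh (z₀ε)`, so `F(ε) = ∑ θ_k ε^k = √((1 + z₀ε)/(1 - z₀ε))` solves
`(1 - z₀²ε²) F' = z₀ F`. The coefficients of this equation give the three-term recurrence
`(k+2) θ_{k+2} = z₀ θ_{k+1} + z₀² k θ_k`, from which `θ_{2j+1} = z₀ θ_{2j}` follows by induction;
the determinant is `θ₁ θ_{2j} - θ₀ θ_{2j+1} = z₀ θ₀ θ_{2j} - θ₀ z₀ θ_{2j} = 0`.
-/

open Complex Finset

noncomputable section

/-- Schur polynomials `S_k(x)`, defined by the generating identity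
`∑_{k≥0} S_k(x) ε^k = exp (∑_{j≥1} x_j ε^j)`; equivalently (over `ℂ`, char 0) by
`S_0 = 1` together with the recursion `(k+1)·S_{k+1} = ∑_{j=1}^{k+1} j·x_j·S_{k+1-j}`
obtained by differentiating the generating identity. -/
def schur (x : ℕ → ℂ) : ℕ → ℂ
  | 0 => 1
  | k + 1 => ((k : ℂ) + 1)⁻¹ *
      ∑ i ∈ Finset.range (k + 1), ((i : ℂ) + 1) * x (i + 1) * schur x (k - i)
  termination_by k => k
  decreasing_by omega

/-- The polynomials `θ_k(z)` with parameters `κ` (where `κ j` denotes `κ_j`), defined by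
`∑_{k≥0} θ_k(z) ε^k = exp(zε + ∑_{j≥1} κ_j ε^{2j+1})`. -/
def thetaAM (κ : ℕ → ℂ) (z : ℂ) : ℕ → ℂ :=
  schur fun m => if m = 1 then z else if m % 2 = 1 then κ ((m - 1) / 2) else 0

/-- The Adler–Moser polynomial `Θ_N(z) = c_N · det_{1≤i,j≤N}(θ_{2i-j}(z))`,
`c_N = ∏_{k=1}^N (2k-1)!!`, as a function of `z`. -/
def AM (κ : ℕ → ℂ) (N : ℕ) (z : ℂ) : ℂ :=
  (∏ k ∈ Finset.range N, ((2 * k + 1).doubleFactorial : ℂ)) *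
    Matrix.det (Matrix.of fun i j : Fin N =>
      if (j : ℕ) + 1 ≤ 2 * ((i : ℕ) + 1) then thetaAM κ z (2 * ((i : ℕ) + 1) - ((j : ℕ) + 1))
      else 0)

end

theorem natCast_mul_schur (x : ℕ → ℂ) (k : ℕ) :
    (k : ℂ) * schur x k = ∑ i ∈ range k, ((i : ℂ) + 1) * x (i + 1) * schur x (k - 1 - i) := by
  cases k with
  | zero => simp
  | succ n =>
    rw [schur, Nat.cast_succ, ← mul_assoc, mul_inv_cancel₀ (Nat.cast_add_one_ne_zero n), one_mul]
    simp only [Nat.add_sub_cancel]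

/-- When the weights `m x_m` of odd and of even index are each geometric with ratio `c`, the
generating function `F` of `schur x` satisfies `(1 - cε²) F' = (x₁ + 2x₂ε) F`. -/
theorem schur_recurrence_of_weights_geometric (x : ℕ → ℂ) (c : ℂ)
    (hx : ∀ i : ℕ, ((i : ℂ) + 3) * x (i + 3) = c * (((i : ℂ) + 1) * x (i + 1))) (k : ℕ) :
    ((k : ℂ) + 2) * schur x (k + 2) = x 1 * schur x (k + 1) + (2 * x 2 + c * k) * schur x k := by
  have hsplit := natCast_mul_schur x (k + 2)
  rw [sum_range_succ', sum_range_succ'] at hsplit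
  have htail : ∑ i ∈ range k, ((((i + 1 + 1 : ℕ) : ℂ) + 1) * x (i + 1 + 1 + 1) *
      schur x (k + 2 - 1 - (i + 1 + 1))) = c * (k * schur x k) := by
    rw [natCast_mul_schur, mul_sum]
    refine sum_congr rfl fun i _ => ?_
    rw [show k + 2 - 1 - (i + 1 + 1) = k - 1 - i by omega]
    push_cast
    linear_combination schur x (k - 1 - i) * hx i
  rw [htail] at hsplit
  push_cast at hsplit
  linear_combination hsplit

theorem succ_two_mul_eq_mul_of_recurrence (a : ℕ → ℂ) (z : ℂ) (h₁ : a 1 = z * a 0)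
    (h : ∀ k : ℕ, ((k : ℂ) + 2) * a (k + 2) = z * a (k + 1) + z ^ 2 * k * a k) (j : ℕ) :
    a (2 * j + 1) = z * a (2 * j) := by
  induction j with
  | zero => simpa using h₁
  | succ n ih =>
    have e₀ := h (2 * n)
    have e₁ := h (2 * n + 1)
    push_cast at e₀ e₁
    have heven : (2 * (n : ℂ) + 2) * a (2 * n + 2) = z ^ 2 * (2 * n + 1) * a (2 * n) := by
      linear_combination e₀ + z * ih
    have hne : (2 * (n : ℂ) + 3) ≠ 0 := by exact_mod_cast (by omega : 2 * n + 3 ≠ 0)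
    refine mul_left_cancel₀ hne ?_
    linear_combination e₁ + z ^ 2 * (2 * (n : ℂ) + 1) * ih - z * heven

section

variable (κ : ℕ → ℂ) (z : ℂ)

/-- The exponents `x_m` in the generating function `exp (∑ x_m ε^m)` of `thetaAM κ z`. -/
def thetaWeights : ℕ → ℂ :=
  fun m => if m = 1 then z else if m % 2 = 1 then κ ((m - 1) / 2) else 0

theorem thetaAM_eq_schur : thetaAM κ z = schur (thetaWeights κ z) := rfl

variable {κ z}

theorem natCast_mul_thetaWeights (hκ : ∀ j, 1 ≤ j → κ j = z ^ (2 * j + 1) / (2 * j + 1))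
    (m : ℕ) : (m : ℂ) * thetaWeights κ z m = if Odd m then z ^ m else 0 := by
  unfold thetaWeights
  rcases Nat.even_or_odd' m with ⟨j, rfl | rfl⟩
  · simp [Nat.mul_mod_right, show ¬ 2 * j = 1 by omega]
  · rcases Nat.eq_zero_or_pos j with rfl | hj
    · simp
    · have hne : (2 * (j : ℂ) + 1) ≠ 0 := by exact_mod_cast (by omega : 2 * j + 1 ≠ 0)
      simp [hj.ne', Nat.odd_iff.mp (odd_two_mul_add_one j), hκ j hj, mul_div_cancel₀ _ hne]

theorem thetaAM_recurrence (hκ : ∀ j, 1 ≤ j → κ j = z ^ (2 * j + 1) / (2 * j + 1)) (k : ℕ) :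
    ((k : ℂ) + 2) * thetaAM κ z (k + 2) =
      z * thetaAM κ z (k + 1) + z ^ 2 * k * thetaAM κ z k := by
  have hgeom (i : ℕ) : ((i : ℂ) + 3) * thetaWeights κ z (i + 3) =
      z ^ 2 * (((i : ℂ) + 1) * thetaWeights κ z (i + 1)) := by
    have h₃ := natCast_mul_thetaWeights hκ (i + 3)
    have h₁ := natCast_mul_thetaWeights hκ (i + 1)
    push_cast at h₃ h₁
    have hparity : Odd (i + 3) ↔ Odd (i + 1) := by simp [Nat.odd_add, parity_simps]
    rw [h₃, h₁]
    by_cases hodd : Odd (i + 1)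
    · simp only [hodd, hparity, if_true]
      ring
    · simp [hodd, hparity]
  rw [thetaAM_eq_schur, schur_recurrence_of_weights_geometric _ _ hgeom]
  simp [thetaWeights]

end

theorem theta_two_by_two_det_vanishes_general
    (z₀ : ℂ) (κ : ℕ → ℂ)
    (hκ : ∀ j, 1 ≤ j → κ j = z₀ ^ (2 * j + 1) / (2 * j + 1)) :
    ∀ j, 1 ≤ j →
      thetaAM κ z₀ 1 * thetaAM κ z₀ (2 * j) - thetaAM κ z₀ 0 * thetaAM κ z₀ (2 * j + 1) = 0 := by
  have hθ₁ : thetaAM κ z₀ 1 = z₀ * thetaAM κ z₀ 0 := by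
    simp [thetaAM_eq_schur, schur, thetaWeights]
  have hodd := succ_two_mul_eq_mul_of_recurrence _ z₀ hθ₁ (thetaAM_recurrence hκ)
  intro j _
  rw [hθ₁, hodd j]
  ring

/-- **Proposition 1.** If `κ_j = z₀^{2j+1}/(2j+1)` for all `j ≥ 1` and `z₀ ≠ 0`, then
`θ₁(z₀)·θ_{2j}(z₀) − θ₀(z₀)·θ_{2j+1}(z₀) = 0` for every `j ≥ 1`. -/
theorem theta_two_by_two_det_vanishes
    (z₀ : ℂ) (hz₀ : z₀ ≠ 0) (κ : ℕ → ℂ)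
    (hκ : ∀ j, 1 ≤ j → κ j = z₀ ^ (2 * j + 1) / (2 * j + 1)) :
    ∀ j, 1 ≤ j →
      thetaAM κ z₀ 1 * thetaAM κ z₀ (2 * j) - thetaAM κ z₀ 0 * thetaAM κ z₀ (2 * j + 1) = 0 :=
  theta_two_by_two_det_vanishes_general z₀ κ hκ
end

section
/- Let κ₁, κ₂ ∈ ℂ and consider Θ₃(z) = z⁶ − 15κ₁z³ + 45κ₂z − 45κ₁². For z₀ ∈ ℂ \ {0}, the point z₀ is a multiple root of Θ₃ (i.e. Θ₃(z₀) = 0 and Θ₃′(z₀) = 0) if and only if κ₁ = z₀³/3 and κ₂ = z₀⁵/5. -/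
/-!
Multiple roots of `Θ₃` are read off from the Euler-type identity
`z Θ₃′(z) − Θ₃(z) = 5 (z³ − 3κ₁)²`, in which the term `45κ₂z` cancels: a multiple root forces
`κ₁ = z³/3`, and then `Θ₃′(z) = 0` is linear in `κ₂`.
-/

section Field

variable {K : Type*} [Field K]

def theta3 (κ₁ κ₂ z : K) : K := z ^ 6 - 15 * κ₁ * z ^ 3 + 45 * κ₂ * z - 45 * κ₁ ^ 2

def theta3Deriv (κ₁ κ₂ z : K) : K := 6 * z ^ 5 - 45 * κ₁ * z ^ 2 + 45 * κ₂

theorem mul_theta3Deriv_sub_theta3 (κ₁ κ₂ z : K) :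
    z * theta3Deriv κ₁ κ₂ z - theta3 κ₁ κ₂ z = 5 * (z ^ 3 - 3 * κ₁) ^ 2 := by
  unfold theta3 theta3Deriv
  ring

theorem theta3_eq_zero_and_theta3Deriv_eq_zero_iff [CharZero K] (κ₁ κ₂ z : K) :
    (theta3 κ₁ κ₂ z = 0 ∧ theta3Deriv κ₁ κ₂ z = 0) ↔ (κ₁ = z ^ 3 / 3 ∧ κ₂ = z ^ 5 / 5) := by
  constructor
  · rintro ⟨hθ, hθ'⟩
    have hsq : (z ^ 3 - 3 * κ₁) ^ 2 = 0 := by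
      have := mul_theta3Deriv_sub_theta3 κ₁ κ₂ z
      rw [hθ, hθ'] at this
      simpa using this.symm
    have hκ₁ : κ₁ = z ^ 3 / 3 := by
      linear_combination (-1 / 3 : K) * (pow_eq_zero_iff two_ne_zero).mp hsq
    refine ⟨hκ₁, ?_⟩
    unfold theta3Deriv at hθ'
    rw [hκ₁] at hθ'
    linear_combination hθ' / 45
  · rintro ⟨rfl, rfl⟩
    unfold theta3 theta3Deriv
    constructor <;> ring

end Field

theorem hasDerivAt_theta3 {𝕜 : Type*} [NontriviallyNormedField 𝕜] (κ₁ κ₂ z : 𝕜) :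
    HasDerivAt (theta3 κ₁ κ₂) (theta3Deriv κ₁ κ₂ z) z := by
  have h := ((((hasDerivAt_pow 6 z).sub ((hasDerivAt_pow 3 z).const_mul (15 * κ₁))).add
    ((hasDerivAt_id z).const_mul (45 * κ₂))).sub_const (45 * κ₁ ^ 2))
  exact h.congr_deriv (by unfold theta3Deriv; push_cast; ring)

theorem theta3_multiple_root_iff_general (κ₁ κ₂ : ℂ) (z₀ : ℂ) :
    ((fun z : ℂ => z ^ 6 - 15 * κ₁ * z ^ 3 + 45 * κ₂ * z - 45 * κ₁ ^ 2) z₀ = 0 ∧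
      deriv (fun z : ℂ => z ^ 6 - 15 * κ₁ * z ^ 3 + 45 * κ₂ * z - 45 * κ₁ ^ 2) z₀ = 0) ↔
    (κ₁ = z₀ ^ 3 / 3 ∧ κ₂ = z₀ ^ 5 / 5) := by
  change (theta3 κ₁ κ₂ z₀ = 0 ∧ deriv (theta3 κ₁ κ₂) z₀ = 0) ↔ _
  rw [(hasDerivAt_theta3 κ₁ κ₂ z₀).deriv]
  exact theta3_eq_zero_and_theta3Deriv_eq_zero_iff κ₁ κ₂ z₀

/-- **Multiple roots of the Adler–Moser polynomial
`Θ₃(z) = z⁶ − 15κ₁z³ + 45κ₂z − 45κ₁²`.**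
For `z₀ ≠ 0`, `z₀` is a multiple root of `Θ₃` (i.e. `Θ₃(z₀) = 0` and `Θ₃′(z₀) = 0`)
iff `κ₁ = z₀³/3` and `κ₂ = z₀⁵/5`. -/
theorem theta3_multiple_root_iff (κ₁ κ₂ : ℂ) (z₀ : ℂ) (hz₀ : z₀ ≠ 0) :
    ((fun z : ℂ => z ^ 6 - 15 * κ₁ * z ^ 3 + 45 * κ₂ * z - 45 * κ₁ ^ 2) z₀ = 0 ∧
      deriv (fun z : ℂ => z ^ 6 - 15 * κ₁ * z ^ 3 + 45 * κ₂ * z - 45 * κ₁ ^ 2) z₀ = 0) ↔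
    (κ₁ = z₀ ^ 3 / 3 ∧ κ₂ = z₀ ^ 5 / 5) :=
  theta3_multiple_root_iff_general κ₁ κ₂ z₀
end

section
/- The Peregrine rogue wave q(x,t) = (1 − 4(4it+1)/(4x² + 16t² + 1))·e^{2it} is a smooth function on ℝ² and satisfies the focusing nonlinear Schrödinger equation i·∂q/∂t + ∂²q/∂x² + 2|q|²q = 0 for all (x,t) ∈ ℝ². -/
open Complex

noncomputable section

/-- Partial derivative in `x` of a function on `ℝ² = ℝ × ℝ` (coordinates `(x,t)`). -/
def pdx (f : ℝ × ℝ → ℂ) (p : ℝ × ℝ) : ℂ := fderiv ℝ f p (1, 0)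

/-- Partial derivative in `t` of a function on `ℝ² = ℝ × ℝ` (coordinates `(x,t)`). -/
def pdt (f : ℝ × ℝ → ℂ) (p : ℝ × ℝ) : ℂ := fderiv ℝ f p (0, 1)

/-- The Peregrine rogue wave `q(x,t) = (1 − 4(4it+1)/(4x² + 16t² + 1))·e^{2it}`. -/
def peregrine (p : ℝ × ℝ) : ℂ :=
  (1 - 4 * (4 * I * (p.2 : ℂ) + 1) / (4 * (p.1 : ℂ) ^ 2 + 16 * (p.2 : ℂ) ^ 2 + 1)) *
    Complex.exp (2 * I * (p.2 : ℂ))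

end

noncomputable section PeregrineAux
namespace PA

/-- The (complexified) denominator. -/
def Dd (p : ℝ × ℝ) : ℂ := 4 * (p.1 : ℂ) ^ 2 + 16 * (p.2 : ℂ) ^ 2 + 1

lemma Dd_ne (p : ℝ × ℝ) : Dd p ≠ 0 := by
  have h : Dd p = ((4 * p.1 ^ 2 + 16 * p.2 ^ 2 + 1 : ℝ) : ℂ) := by
    simp only [Dd]; push_cast; ring
  rw [h, Complex.ofReal_ne_zero]; positivity

/-- Formula for `∂q/∂x`. -/
def qxF (p : ℝ × ℝ) : ℂ :=
  32 * (p.1 : ℂ) * (4 * I * (p.2 : ℂ) + 1) / Dd p ^ 2 * Complex.exp (2 * I * (p.2 : ℂ))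

/-- Formula for `∂²q/∂x²`. -/
def qxxF (p : ℝ × ℝ) : ℂ :=
  32 * (4 * I * (p.2 : ℂ) + 1) * (Dd p - 16 * (p.1 : ℂ) ^ 2) / Dd p ^ 3 *
    Complex.exp (2 * I * (p.2 : ℂ))

/-- Formula for `∂q/∂t`. -/
def qtF (p : ℝ × ℝ) : ℂ :=
  (2 * I - 16 * I / Dd p - 8 * I * (4 * I * (p.2 : ℂ) + 1) / Dd p +
      128 * (p.2 : ℂ) * (4 * I * (p.2 : ℂ) + 1) / Dd p ^ 2) *
    Complex.exp (2 * I * (p.2 : ℂ))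

/-- The real → complex inclusion `ℝ² → ℂ²`. -/
def ι (p : ℝ × ℝ) : ℂ × ℂ := ((p.1 : ℂ), (p.2 : ℂ))

lemma cdι : ContDiff ℝ (⊤ : ℕ∞) ι :=
  (Complex.ofRealCLM.contDiff.comp contDiff_fst).prodMk
    (Complex.ofRealCLM.contDiff.comp contDiff_snd)

lemma smooth_comp {H : ℂ × ℂ → ℂ} (h : ∀ p : ℝ × ℝ, ContDiffAt ℂ ⊤ H (ι p)) :
    ContDiff ℝ (⊤ : ℕ∞) (fun p => H (ι p)) := by
  rw [contDiff_iff_contDiffAt]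
  intro p
  exact (((h p).restrict_scalars ℝ).of_le (m := ((⊤ : ℕ∞) : WithTop ℕ∞)) le_top).comp p cdι.contDiffAt

lemma cdP : ContDiff ℝ (⊤ : ℕ∞) peregrine := by
  apply smooth_comp (H := fun z : ℂ × ℂ =>
    (1 - 4 * (4 * I * z.2 + 1) / (4 * z.1 ^ 2 + 16 * z.2 ^ 2 + 1)) * Complex.exp (2 * I * z.2))
  intro p
  apply ContDiffAt.mul
  · apply ContDiffAt.sub contDiffAt_const
    apply ContDiffAt.div
    · exact contDiffAt_const.mul ((contDiffAt_const.mul contDiffAt_snd).add contDiffAt_const)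
    · exact ((contDiffAt_const.mul (contDiffAt_fst.pow 2)).add
        (contDiffAt_const.mul (contDiffAt_snd.pow 2))).add contDiffAt_const
    · exact Dd_ne p
  · exact Complex.contDiff_exp.contDiffAt.comp _ (contDiffAt_const.mul contDiffAt_snd)

lemma cdQx : ContDiff ℝ (⊤ : ℕ∞) qxF := by
  apply smooth_comp (H := fun z : ℂ × ℂ =>
    32 * z.1 * (4 * I * z.2 + 1) / (4 * z.1 ^ 2 + 16 * z.2 ^ 2 + 1) ^ 2 *
      Complex.exp (2 * I * z.2))
  intro p
  apply ContDiffAt.mul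
  · apply ContDiffAt.div
    · exact (contDiffAt_const.mul contDiffAt_fst).mul
        ((contDiffAt_const.mul contDiffAt_snd).add contDiffAt_const)
    · exact (((contDiffAt_const.mul (contDiffAt_fst.pow 2)).add
        (contDiffAt_const.mul (contDiffAt_snd.pow 2))).add contDiffAt_const).pow 2
    · exact pow_ne_zero 2 (Dd_ne p)
  · exact Complex.contDiff_exp.contDiffAt.comp _ (contDiffAt_const.mul contDiffAt_snd)

lemma pdx_eq {f : ℝ × ℝ → ℂ} {p : ℝ × ℝ} (hf : DifferentiableAt ℝ f p) {c : ℂ}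
    (h : HasDerivAt (fun x => f (x, p.2)) c p.1) : pdx f p = c := by
  have h1 : HasDerivAt (fun x : ℝ => (x, p.2)) ((1 : ℝ), (0 : ℝ)) p.1 :=
    (hasDerivAt_id p.1).prodMk (hasDerivAt_const p.1 p.2)
  have h2 : HasDerivAt (fun x => f (x, p.2)) (fderiv ℝ f p (1, 0)) p.1 :=
    hf.hasFDerivAt.comp_hasDerivAt p.1 h1
  exact h2.unique h

lemma pdt_eq {f : ℝ × ℝ → ℂ} {p : ℝ × ℝ} (hf : DifferentiableAt ℝ f p) {c : ℂ}
    (h : HasDerivAt (fun t => f (p.1, t)) c p.2) : pdt f p = c := by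
  have h1 : HasDerivAt (fun t : ℝ => (p.1, t)) ((0 : ℝ), (1 : ℝ)) p.2 :=
    (hasDerivAt_const p.2 p.1).prodMk (hasDerivAt_id p.2)
  have h2 : HasDerivAt (fun t => f (p.1, t)) (fderiv ℝ f p (0, 1)) p.2 :=
    hf.hasFDerivAt.comp_hasDerivAt p.2 h1
  exact h2.unique h

lemma pdx_peregrine (p : ℝ × ℝ) : pdx peregrine p = qxF p := by
  apply pdx_eq (cdP.differentiable (by simp) p)
  have key : HasDerivAt (fun w : ℂ =>
      (1 - 4 * (4 * I * (p.2 : ℂ) + 1) / (4 * w ^ 2 + 16 * (p.2 : ℂ) ^ 2 + 1)) *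
        Complex.exp (2 * I * (p.2 : ℂ))) (qxF p) (p.1 : ℂ) := by
    have hden := (((hasDerivAt_pow 2 ((p.1 : ℂ))).const_mul (4 : ℂ)).add_const
      (16 * (p.2 : ℂ) ^ 2)).add_const 1
    have h2 := (((hasDerivAt_const (p.1 : ℂ) (4 * (4 * I * (p.2 : ℂ) + 1))).div hden
      (Dd_ne p)).const_sub 1).mul_const (Complex.exp (2 * I * (p.2 : ℂ)))
    refine HasDerivAt.congr_deriv h2 ?_
    have hD := Dd_ne p
    simp only [qxF, Dd] at *
    field_simp
    ring
  exact key.comp_ofReal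

lemma pdt_peregrine (p : ℝ × ℝ) : pdt peregrine p = qtF p := by
  apply pdt_eq (cdP.differentiable (by simp) p)
  have key : HasDerivAt (fun w : ℂ =>
      (1 - 4 * (4 * I * w + 1) / (4 * (p.1 : ℂ) ^ 2 + 16 * w ^ 2 + 1)) *
        Complex.exp (2 * I * w)) (qtF p) (p.2 : ℂ) := by
    have hden := (((hasDerivAt_pow 2 ((p.2 : ℂ))).const_mul (16 : ℂ)).const_add
      (4 * (p.1 : ℂ) ^ 2)).add_const 1
    have hnum := (((hasDerivAt_id ((p.2 : ℂ))).const_mul (4 * I)).add_const 1).const_mul 4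
    have hexp := ((hasDerivAt_id ((p.2 : ℂ))).const_mul (2 * I)).cexp
    have h2 := (((hnum.div hden (Dd_ne p)).const_sub 1)).mul hexp
    refine HasDerivAt.congr_deriv h2 ?_
    have hD := Dd_ne p
    simp only [qtF, Dd, Pi.div_apply, Pi.pow_apply, id] at *
    field_simp
    ring
  exact key.comp_ofReal

lemma pdx_qxF (p : ℝ × ℝ) : pdx qxF p = qxxF p := by
  apply pdx_eq (cdQx.differentiable (by simp) p)
  have key : HasDerivAt (fun w : ℂ =>
      32 * w * (4 * I * (p.2 : ℂ) + 1) / (4 * w ^ 2 + 16 * (p.2 : ℂ) ^ 2 + 1) ^ 2 *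
        Complex.exp (2 * I * (p.2 : ℂ))) (qxxF p) (p.1 : ℂ) := by
    have hden := ((((hasDerivAt_pow 2 ((p.1 : ℂ))).const_mul (4 : ℂ)).add_const
      (16 * (p.2 : ℂ) ^ 2)).add_const 1).pow 2
    have hnum := ((hasDerivAt_id ((p.1 : ℂ))).const_mul 32).mul_const (4 * I * (p.2 : ℂ) + 1)
    have h2 := ((hnum.div hden (pow_ne_zero 2 (Dd_ne p)))).mul_const
      (Complex.exp (2 * I * (p.2 : ℂ)))
    refine HasDerivAt.congr_deriv h2 ?_
    have hD := Dd_ne p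
    simp only [qxxF, Dd, Pi.div_apply, Pi.pow_apply, id, Nat.cast_ofNat, Nat.add_one_sub_one, pow_one] at *
    field_simp
    ring
  exact key.comp_ofReal

lemma abs_sq (p : ℝ × ℝ) :
    ((‖peregrine p‖ : ℂ)) ^ 2 =
      (1 - 4 * (4 * I * (p.2 : ℂ) + 1) / Dd p) * (1 - 4 * (1 - 4 * I * (p.2 : ℂ)) / Dd p) := by
  have h1 : ‖peregrine p‖ =
      ‖(1 - 4 * (4 * I * (p.2 : ℂ) + 1) / Dd p)‖ := by
    rw [show peregrine p =
        (1 - 4 * (4 * I * (p.2 : ℂ) + 1) / Dd p) * Complex.exp (2 * I * (p.2 : ℂ)) from rfl,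
      norm_mul, show (2 * I * (p.2 : ℂ)) = ((2 * p.2 : ℝ) : ℂ) * I by push_cast; ring,
      Complex.norm_exp_ofReal_mul_I, mul_one]
  rw [h1, ← Complex.ofReal_pow, Complex.sq_norm, ← Complex.mul_conj]
  congr 1
  have hD := Dd_ne p
  simp only [Dd, map_sub, map_one, map_div₀, map_mul, map_add, Complex.conj_I,
    Complex.conj_ofReal, map_pow, map_ofNat]
  ring

end PA
end PeregrineAux

lemma I_pow_three : I ^ 3 = -I := by
  rw [pow_succ, Complex.I_sq, neg_one_mul]

set_option maxHeartbeats 2000000 in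
/-- **The Peregrine rogue wave is smooth on `ℝ²` and satisfies the focusing nonlinear
Schrödinger equation `i·q_t + q_xx + 2|q|²q = 0` at every `(x,t) ∈ ℝ²`.** -/
theorem peregrine_solves_NLS :
    ContDiff ℝ (⊤ : ℕ∞) peregrine ∧
      ∀ p : ℝ × ℝ,
        I * pdt peregrine p + pdx (fun p' => pdx peregrine p') p
          + 2 * ((‖peregrine p‖ : ℂ)) ^ 2 * peregrine p = 0 := by
  refine ⟨PA.cdP, fun p => ?_⟩
  have h1 : (fun p' => pdx peregrine p') = PA.qxF := funext PA.pdx_peregrine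
  rw [h1, PA.pdt_peregrine, PA.pdx_qxF, PA.abs_sq]
  have hD : PA.Dd p ≠ 0 := PA.Dd_ne p
  have hDexp : PA.Dd p = 4 * (p.1 : ℂ) ^ 2 + 16 * (p.2 : ℂ) ^ 2 + 1 := rfl
  simp only [peregrine, PA.qtF, PA.qxxF, ← hDexp]
  have hE : Complex.exp (2 * I * (p.2 : ℂ)) ≠ 0 := Complex.exp_ne_zero _
  rw [hDexp] at hD ⊢
  field_simp
  ring_nf
  simp only [_root_.I_pow_three, Complex.I_sq]
  ring
end
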